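/- Let (t_n)_{n≥0} be a strictly increasing sequence with t_n → ∞, M > 0, and B_n = −α Δ_n where Δ_n = t_n − t_{n−1} and α > 0. If there exist 0 < κ < α and constants C ∈ ℝ, n' ≥ 1 such that Δ_{n+1} ≤ (κ/M)(t_n − t₀) + C for all n ≥ n', then Σ_{q=1}^{n} B_q + M Δ_{n+1} = −α(t_n − t₀) + M Δ_{n+1} → −∞ as n → ∞. -/

import Mathlib

/-!
The sum telescopes to `-α (t n - t 0)`, and the gap bound gives
`M Δ_{n+1} ≤ κ (t n - t 0) + M C`, so the quantity is at most `(κ - α) (t n - t 0) + M C`,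
which tends to `-∞` because `κ < α` and `t n → ∞`.
-/

open Filter

theorem Finset.sum_Icc_one_sub_pred {G : Type*} [AddCommGroup G] (f : ℕ → G) (n : ℕ) :
    ∑ q ∈ Finset.Icc 1 n, (f q - f (q - 1)) = f n - f 0 := by
  induction n with
  | zero => simp
  | succ n ih =>
    rw [Finset.sum_Icc_succ_top (by omega), ih, Nat.add_sub_cancel]
    abel

theorem tendsto_atBot_of_le_neg_mul_add {ι : Type*} {l : Filter ι} {u s : ι → ℝ} {c d : ℝ}
    (hs : Tendsto s l atTop) (hc : c < 0) (hle : ∀ᶠ i in l, u i ≤ c * s i + d) :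
    Tendsto u l atBot :=
  tendsto_atBot_mono' l hle ((hs.const_mul_atTop_of_neg hc).atBot_add tendsto_const_nhds)

theorem impulsive_growing_gaps_criterion_general
    (t : ℕ → ℝ) (htop : Tendsto t atTop atTop)
    (M α : ℝ) (hM : 0 < M)
    (B : ℕ → ℝ) (hB : ∀ n : ℕ, 1 ≤ n → B n = -α * (t n - t (n - 1)))
    (κ C : ℝ) (hκα : κ < α) (n' : ℕ)
    (hgap : ∀ n : ℕ, n' ≤ n → t (n + 1) - t n ≤ κ / M * (t n - t 0) + C) :
    (∀ n : ℕ, 1 ≤ n →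
      (∑ q ∈ Finset.Icc 1 n, B q) + M * (t (n + 1) - t n) =
        -α * (t n - t 0) + M * (t (n + 1) - t n)) ∧
    Tendsto (fun n => (∑ q ∈ Finset.Icc 1 n, B q) + M * (t (n + 1) - t n))
      atTop atBot := by
  have hsum (n : ℕ) : ∑ q ∈ Finset.Icc 1 n, B q = -α * (t n - t 0) := by
    rw [Finset.sum_congr rfl fun q hq => hB q (Finset.mem_Icc.1 hq).1, ← Finset.mul_sum,
      Finset.sum_Icc_one_sub_pred]
  refine ⟨fun n _ => by rw [hsum], ?_⟩
  refine tendsto_atBot_of_le_neg_mul_add (d := M * C)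
    (htop.atTop_add (tendsto_const_nhds (x := -t 0))) (sub_neg.2 hκα) ?_
  filter_upwards [eventually_ge_atTop n'] with n hn
  have hMgap := mul_le_mul_of_nonneg_left (hgap n hn) hM.le
  rw [mul_add, ← mul_assoc, mul_div_cancel₀ _ hM.ne'] at hMgap
  rw [hsum]
  linarith

/-- Proposition 6: With `B n = −α Δ_n`, `Δ_n = t_n − t_{n−1}`, `α > 0`,
`M > 0`, if there are `0 < κ < α`, `C` and `n' ≥ 1` with
`Δ_{n+1} ≤ (κ/M)(t_n − t₀) + C` for `n ≥ n'`, then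
`∑_{q=1}^n B_q + M Δ_{n+1} = −α(t_n − t₀) + M Δ_{n+1} → −∞`. -/
theorem impulsive_growing_gaps_criterion
    (t : ℕ → ℝ) (ht : StrictMono t) (htop : Tendsto t atTop atTop)
    (M α : ℝ) (hM : 0 < M) (hα : 0 < α)
    (B : ℕ → ℝ) (hB : ∀ n : ℕ, 1 ≤ n → B n = -α * (t n - t (n - 1)))
    (κ C : ℝ) (hκ : 0 < κ) (hκα : κ < α) (n' : ℕ) (hn' : 1 ≤ n')
    (hgap : ∀ n : ℕ, n' ≤ n → t (n + 1) - t n ≤ κ / M * (t n - t 0) + C) :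
    (∀ n : ℕ, 1 ≤ n →
      (∑ q ∈ Finset.Icc 1 n, B q) + M * (t (n + 1) - t n) =
        -α * (t n - t 0) + M * (t (n + 1) - t n)) ∧
    Tendsto (fun n => (∑ q ∈ Finset.Icc 1 n, B q) + M * (t (n + 1) - t n))
      atTop atBot :=
  impulsive_growing_gaps_criterion_general t htop M α hM B hB κ C hκα n' hgap
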